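/- arXiv:2210.16775 — 4 statements merged into one kernel-verified Lean document; each statement's English description precedes it below -/
import Mathlib

section
/- Let Z, X, Y be square-integrable real random variables (or vectors), and let E_X, E_Y be the L²-optimal linear predictors of X and Y from Z (so that X - E_X Z and Y - E_Y Z are orthogonal to Z in L²). Define X_γ = X + (√γ - 1) E_X Z and Y_γ = Y + (√γ - 1) E_Y Z. Then for any linear map H, E‖Y_γ - H X_γ‖² = E‖(Y - E_Y Z) - H(X - E_X Z)‖² + γ E‖E_Y Z - H E_X Z‖². -/
open MeasureTheory RealInnerProductSpace

/-
Write `R = (Y - E_Y Z) - H (X - E_X Z)` and `S = E_Y Z - H E_X Z = (E_Y - H E_X) Z`; then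
`Y_γ - H X_γ = R + √γ • S` pointwise. Since `⟪H u, A z⟫ = ⟪u, H† A z⟫`, the residual `R` is again
orthogonal in L² to every linear function of `Z`, in particular to `S`, so the cross term of
`E‖R + √γ • S‖²` vanishes and Pythagoras leaves `E‖R‖² + γ E‖S‖²`.
-/

section

variable {Ω : Type*} [MeasurableSpace Ω] {μ : Measure Ω}

theorem MeasureTheory.MemLp.integrable_real_inner {E : Type*} [NormedAddCommGroup E]
    [InnerProductSpace ℝ E] {f g : Ω → E} (hf : MemLp f 2 μ) (hg : MemLp g 2 μ) :
    Integrable (fun ω => ⟪f ω, g ω⟫) μ :=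
  (L2.integrable_inner (𝕜 := ℝ) (hf.toLp f) (hg.toLp g)).congr <| by
    filter_upwards [hf.coeFn_toLp, hg.coeFn_toLp] with ω hfω hgω
    rw [hfω, hgω]

theorem integral_norm_add_smul_sq_of_integral_inner_eq_zero {E : Type*} [NormedAddCommGroup E]
    [InnerProductSpace ℝ E] {R S : Ω → E} (hR : MemLp R 2 μ) (hS : MemLp S 2 μ)
    (horth : ∫ ω, ⟪R ω, S ω⟫ ∂μ = 0) (c : ℝ) :
    ∫ ω, ‖R ω + c • S ω‖ ^ 2 ∂μ = ∫ ω, ‖R ω‖ ^ 2 ∂μ + c ^ 2 * ∫ ω, ‖S ω‖ ^ 2 ∂μ := by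
  have hR2 : Integrable (fun ω => ‖R ω‖ ^ 2) μ := (memLp_two_iff_integrable_sq_norm hR.1).1 hR
  have hS2 : Integrable (fun ω => ‖S ω‖ ^ 2) μ := (memLp_two_iff_integrable_sq_norm hS.1).1 hS
  have hRS : Integrable (fun ω => ⟪R ω, S ω⟫) μ := hR.integrable_real_inner hS
  have hexpand : ∀ ω, ‖R ω + c • S ω‖ ^ 2 =
      ‖R ω‖ ^ 2 + 2 * c * ⟪R ω, S ω⟫ + c ^ 2 * ‖S ω‖ ^ 2 := by
    intro ω
    rw [norm_add_sq_real, real_inner_smul_right, norm_smul, Real.norm_eq_abs, mul_pow, sq_abs]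
    ring
  simp_rw [hexpand]
  rw [integral_add, integral_add, integral_const_mul, integral_const_mul, horth]
  · ring
  exacts [hR2, hRS.const_mul _, hR2.add (hRS.const_mul _), hS2.const_mul _]

theorem integral_inner_sub_comp_eq_zero {E F G : Type*}
    [NormedAddCommGroup E] [InnerProductSpace ℝ E] [CompleteSpace E]
    [NormedAddCommGroup F] [InnerProductSpace ℝ F] [CompleteSpace F]
    [NormedAddCommGroup G] [NormedSpace ℝ G]
    {W : Ω → G} {U : Ω → E} {V : Ω → F} (hW : MemLp W 2 μ) (hU : MemLp U 2 μ) (hV : MemLp V 2 μ)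
    (hoU : ∀ A : G →L[ℝ] E, ∫ ω, ⟪U ω, A (W ω)⟫ ∂μ = 0)
    (hoV : ∀ A : G →L[ℝ] F, ∫ ω, ⟪V ω, A (W ω)⟫ ∂μ = 0) (H : E →L[ℝ] F) (A : G →L[ℝ] F) :
    ∫ ω, ⟪V ω - H (U ω), A (W ω)⟫ ∂μ = 0 := by
  set B : G →L[ℝ] E := (ContinuousLinearMap.adjoint H).comp A
  have hpointwise : ∀ ω, ⟪V ω - H (U ω), A (W ω)⟫ = ⟪V ω, A (W ω)⟫ - ⟪U ω, B (W ω)⟫ := by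
    intro ω
    rw [inner_sub_left, ContinuousLinearMap.comp_apply, ContinuousLinearMap.adjoint_inner_right]
  simp_rw [hpointwise]
  rw [integral_sub, hoV A, hoU B, sub_zero]
  exacts [hV.integrable_real_inner (A.comp_memLp' hW), hU.integrable_real_inner (B.comp_memLp' hW)]

end

theorem stmt_5_general {Ω HZ HX HY : Type*} [MeasurableSpace Ω]
    {μ : Measure Ω}
    [NormedAddCommGroup HZ] [InnerProductSpace ℝ HZ]
    [NormedAddCommGroup HX] [InnerProductSpace ℝ HX] [CompleteSpace HX]
    [NormedAddCommGroup HY] [InnerProductSpace ℝ HY] [CompleteSpace HY]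
    (Z : Ω → HZ) (X : Ω → HX) (Y : Ω → HY)
    (hZ : MemLp Z 2 μ) (hX : MemLp X 2 μ) (hY : MemLp Y 2 μ)
    (EX : HZ →L[ℝ] HX) (EY : HZ →L[ℝ] HY)
    -- residuals are orthogonal in L² to every linear function of Z
    (hoX : ∀ A : HZ →L[ℝ] HX, ∫ ω, ⟪X ω - EX (Z ω), A (Z ω)⟫ ∂μ = 0)
    (hoY : ∀ A : HZ →L[ℝ] HY, ∫ ω, ⟪Y ω - EY (Z ω), A (Z ω)⟫ ∂μ = 0)
    (γ : ℝ) (hγ : 0 ≤ γ) (H : HX →L[ℝ] HY)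
    (Xγ : Ω → HX) (Yγ : Ω → HY)
    (hXγ : ∀ ω, Xγ ω = X ω + (Real.sqrt γ - 1) • EX (Z ω))
    (hYγ : ∀ ω, Yγ ω = Y ω + (Real.sqrt γ - 1) • EY (Z ω)) :
    ∫ ω, ‖Yγ ω - H (Xγ ω)‖ ^ 2 ∂μ =
      ∫ ω, ‖(Y ω - EY (Z ω)) - H (X ω - EX (Z ω))‖ ^ 2 ∂μ +
        γ * ∫ ω, ‖EY (Z ω) - H (EX (Z ω))‖ ^ 2 ∂μ := by
  have hUX : MemLp (fun ω => X ω - EX (Z ω)) 2 μ := hX.sub (EX.comp_memLp' hZ)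
  have hUY : MemLp (fun ω => Y ω - EY (Z ω)) 2 μ := hY.sub (EY.comp_memLp' hZ)
  have hdecomp : ∀ ω, Yγ ω - H (Xγ ω) = ((Y ω - EY (Z ω)) - H (X ω - EX (Z ω))) +
      Real.sqrt γ • (EY - H.comp EX) (Z ω) := by
    intro ω
    simp only [hXγ, hYγ, map_add, map_sub, map_smul, sub_apply,
      ContinuousLinearMap.comp_apply]
    module
  simp_rw [hdecomp]
  rw [integral_norm_add_smul_sq_of_integral_inner_eq_zero ?_ ?_
    (integral_inner_sub_comp_eq_zero hZ hUX hUY hoX hoY H _), Real.sq_sqrt hγ]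
  · rfl
  exacts [hUY.sub (H.comp_memLp' hUX), (EY - H.comp EX).comp_memLp' hZ]

theorem stmt_5 {Ω HZ HX HY : Type*} [MeasurableSpace Ω]
    {μ : Measure Ω} [IsProbabilityMeasure μ]
    [NormedAddCommGroup HZ] [InnerProductSpace ℝ HZ] [CompleteSpace HZ]
    [NormedAddCommGroup HX] [InnerProductSpace ℝ HX] [CompleteSpace HX]
    [NormedAddCommGroup HY] [InnerProductSpace ℝ HY] [CompleteSpace HY]
    (Z : Ω → HZ) (X : Ω → HX) (Y : Ω → HY)
    (hZ : MemLp Z 2 μ) (hX : MemLp X 2 μ) (hY : MemLp Y 2 μ)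
    (EX : HZ →L[ℝ] HX) (EY : HZ →L[ℝ] HY)
    -- residuals are orthogonal in L² to every linear function of Z
    (hoX : ∀ A : HZ →L[ℝ] HX, ∫ ω, ⟪X ω - EX (Z ω), A (Z ω)⟫ ∂μ = 0)
    (hoY : ∀ A : HZ →L[ℝ] HY, ∫ ω, ⟪Y ω - EY (Z ω), A (Z ω)⟫ ∂μ = 0)
    (γ : ℝ) (hγ : 0 ≤ γ) (H : HX →L[ℝ] HY)
    (Xγ : Ω → HX) (Yγ : Ω → HY)
    (hXγ : ∀ ω, Xγ ω = X ω + (Real.sqrt γ - 1) • EX (Z ω))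
    (hYγ : ∀ ω, Yγ ω = Y ω + (Real.sqrt γ - 1) • EY (Z ω)) :
    ∫ ω, ‖Yγ ω - H (Xγ ω)‖ ^ 2 ∂μ =
      ∫ ω, ‖(Y ω - EY (Z ω)) - H (X ω - EX (Z ω))‖ ^ 2 ∂μ +
        γ * ∫ ω, ‖EY (Z ω) - H (EX (Z ω))‖ ^ 2 ∂μ :=
  stmt_5_general Z X Y hZ hX hY EX EY hoX hoY γ hγ H Xγ Yγ hXγ hYγ
end

section
/- Under the setup of the previous statement, the population anchor-regression coefficient H^γ = Cov(Y_γ, ψ_γ) · Cov(ψ_γ, ψ_γ)⁻¹ satisfies H^γ − B_YX = [Σ^⊥ + γ Σ^∥] · [B_XC Σ_C B_XCᵀ + Σ_X + γ M_X Σ_Z M_Xᵀ]⁻¹, where Σ^⊥ = B_YC Σ_C B_XCᵀ and Σ^∥ = (B_YZ + B_YC B_CZ) Σ_Z M_Xᵀ. -/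
open Matrix

theorem Matrix.mul_nonsing_inv_sub_of_sub_mul_eq {l m R : Type*} [Fintype m] [DecidableEq m]
    [CommRing R] {A B D : Matrix l m R} {C : Matrix m m R} (hC : IsUnit C.det)
    (h : A - B * C = D) : A * C⁻¹ - B = D * C⁻¹ := by
  rw [← h, Matrix.sub_mul, Matrix.mul_assoc, mul_nonsing_inv _ hC, Matrix.mul_one]

theorem anchor_cross_cov_sub_eq {z c x y R : Type*} [Fintype z] [Fintype c] [Fintype x]
    [CommRing R] (B_CZ : Matrix c z R) (B_YZ : Matrix y z R) (B_XC : Matrix x c R)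
    (B_YC : Matrix y c R) (B_YX : Matrix y x R) (M_X : Matrix x z R)
    (SigC : Matrix c c R) (SigX : Matrix x x R) (SigZ : Matrix z z R) (γ : R) :
    ((B_YC + B_YX * B_XC) * SigC * B_XCᵀ + B_YX * SigX +
        γ • ((B_YZ + B_YC * B_CZ + B_YX * M_X) * SigZ * M_Xᵀ)) -
      B_YX * (B_XC * SigC * B_XCᵀ + SigX + γ • (M_X * SigZ * M_Xᵀ)) =
    B_YC * SigC * B_XCᵀ + γ • ((B_YZ + B_YC * B_CZ) * SigZ * M_Xᵀ) := by
  simp only [Matrix.add_mul, Matrix.mul_add, Matrix.mul_smul, smul_add, Matrix.mul_assoc]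
  abel

theorem stmt_13_general {dz dc dx dy : ℕ}
    (B_CZ : Matrix (Fin dc) (Fin dz) ℝ)
    (B_XC : Matrix (Fin dx) (Fin dc) ℝ) (B_YZ : Matrix (Fin dy) (Fin dz) ℝ)
    (B_YC : Matrix (Fin dy) (Fin dc) ℝ) (B_YX : Matrix (Fin dy) (Fin dx) ℝ)
    (SigC : Matrix (Fin dc) (Fin dc) ℝ) (SigX : Matrix (Fin dx) (Fin dx) ℝ)
    (SigZ : Matrix (Fin dz) (Fin dz) ℝ)
    (γ : ℝ)
    (M_X : Matrix (Fin dx) (Fin dz) ℝ)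
    (M_Y : Matrix (Fin dy) (Fin dz) ℝ) (hMY : M_Y = B_YZ + B_YC * B_CZ + B_YX * M_X)
    (CovPsi : Matrix (Fin dx) (Fin dx) ℝ)
    (hCovPsi : CovPsi = B_XC * SigC * B_XCᵀ + SigX + γ • (M_X * SigZ * M_Xᵀ))
    (CovYPsi : Matrix (Fin dy) (Fin dx) ℝ)
    (hCovYPsi : CovYPsi = (B_YC + B_YX * B_XC) * SigC * B_XCᵀ + B_YX * SigX +
      γ • (M_Y * SigZ * M_Xᵀ))
    (hinv : IsUnit CovPsi.det)
    (Hγ : Matrix (Fin dy) (Fin dx) ℝ) (hHγ : Hγ = CovYPsi * CovPsi⁻¹)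
    (SigPerp : Matrix (Fin dy) (Fin dx) ℝ) (hPerp : SigPerp = B_YC * SigC * B_XCᵀ)
    (SigPar : Matrix (Fin dy) (Fin dx) ℝ)
    (hPar : SigPar = (B_YZ + B_YC * B_CZ) * SigZ * M_Xᵀ) :
    Hγ - B_YX = (SigPerp + γ • SigPar) * CovPsi⁻¹ := by
  rw [hHγ]
  refine mul_nonsing_inv_sub_of_sub_mul_eq hinv ?_
  rw [hCovYPsi, hCovPsi, hMY, hPerp, hPar]
  exact anchor_cross_cov_sub_eq B_CZ B_YZ B_XC B_YC B_YX M_X SigC SigX SigZ γ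

theorem stmt_13 {dz dc dx dy : ℕ}
    (B_CZ : Matrix (Fin dc) (Fin dz) ℝ) (B_XZ : Matrix (Fin dx) (Fin dz) ℝ)
    (B_XC : Matrix (Fin dx) (Fin dc) ℝ) (B_YZ : Matrix (Fin dy) (Fin dz) ℝ)
    (B_YC : Matrix (Fin dy) (Fin dc) ℝ) (B_YX : Matrix (Fin dy) (Fin dx) ℝ)
    (SigC : Matrix (Fin dc) (Fin dc) ℝ) (SigX : Matrix (Fin dx) (Fin dx) ℝ)
    (SigZ : Matrix (Fin dz) (Fin dz) ℝ)
    (γ : ℝ) (hγ : 0 ≤ γ)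
    (M_X : Matrix (Fin dx) (Fin dz) ℝ) (hMX : M_X = B_XZ + B_XC * B_CZ)
    (M_Y : Matrix (Fin dy) (Fin dz) ℝ) (hMY : M_Y = B_YZ + B_YC * B_CZ + B_YX * M_X)
    (CovPsi : Matrix (Fin dx) (Fin dx) ℝ)
    (hCovPsi : CovPsi = B_XC * SigC * B_XCᵀ + SigX + γ • (M_X * SigZ * M_Xᵀ))
    (CovYPsi : Matrix (Fin dy) (Fin dx) ℝ)
    (hCovYPsi : CovYPsi = (B_YC + B_YX * B_XC) * SigC * B_XCᵀ + B_YX * SigX +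
      γ • (M_Y * SigZ * M_Xᵀ))
    (hinv : IsUnit CovPsi.det)
    (Hγ : Matrix (Fin dy) (Fin dx) ℝ) (hHγ : Hγ = CovYPsi * CovPsi⁻¹)
    (SigPerp : Matrix (Fin dy) (Fin dx) ℝ) (hPerp : SigPerp = B_YC * SigC * B_XCᵀ)
    (SigPar : Matrix (Fin dy) (Fin dx) ℝ)
    (hPar : SigPar = (B_YZ + B_YC * B_CZ) * SigZ * M_Xᵀ) :
    Hγ - B_YX = (SigPerp + γ • SigPar) * CovPsi⁻¹ :=
  stmt_13_general B_CZ B_XC B_YZ B_YC B_YX SigC SigX SigZ γ M_X M_Y hMY CovPsi hCovPsi CovYPsi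
    hCovYPsi hinv Hγ hHγ SigPerp hPerp SigPar hPar
end

section
/- Let T be a compact self-adjoint positive operator on a Hilbert space with eigenvalues λ_k satisfying α ≤ k^b λ_k ≤ β for all k ≥ 1, where b > 1 and α, β > 0. Then for every ξ > 0, Σ_k λ_k/(λ_k+ξ)² ≤ (1/ξ) Σ_k λ_k/(λ_k+ξ) and Σ_k λ_k/(λ_k+ξ) ≤ ∫_0^∞ β t^{-b}/(β t^{-b} + ξ) dt = β^{1/b} ξ^{-1/b} (π/b)/sin(π/b), so that Σ_{k=1}^∞ λ_k/(λ_k + ξ)² ≤ β^{1/b} · (π/b)/sin(π/b) · ξ^{-(1+1/b)}; in particular the sum is O(ξ^{-(1+1/b)}) as ξ → 0. -/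
open MeasureTheory Real Set

private lemma beta_real_aux (a : ℝ) (h0 : 0 < a) (h1 : a < 1) :
    ∫ x in Ioo (0:ℝ) 1, x ^ (-a) * (1-x) ^ (a-1) = π / Real.sin (π * a) := by
  have key : Complex.betaIntegral ((1-a : ℝ) : ℂ) ((a : ℝ) : ℂ)
      = ((∫ x in (0:ℝ)..1, x ^ (-a) * (1-x) ^ (a-1) : ℝ) : ℂ) := by
    rw [Complex.betaIntegral]
    have step : ∀ x ∈ uIcc (0:ℝ) 1,
        (x:ℂ) ^ (((1-a:ℝ):ℂ) - 1) * ((1:ℂ) - (x:ℂ)) ^ (((a:ℝ):ℂ) - 1)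
          = ((x ^ (-a) * (1-x) ^ (a-1) : ℝ) : ℂ) := by
      intro x hx
      rw [uIcc_of_le (by norm_num)] at hx
      rw [Complex.ofReal_mul, Complex.ofReal_cpow hx.1, Complex.ofReal_cpow (by linarith [hx.2])]
      push_cast
      ring_nf
    rw [intervalIntegral.integral_congr step]
    exact RCLike.intervalIntegral_ofReal (𝕜 := ℂ)
  have hG : Complex.Gamma ((1-a:ℝ):ℂ) * Complex.Gamma ((a:ℝ):ℂ)
      = Complex.betaIntegral ((1-a : ℝ) : ℂ) ((a : ℝ) : ℂ) := by
    have := Complex.Gamma_mul_Gamma_eq_betaIntegral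
      (s := ((1-a:ℝ):ℂ)) (t := ((a:ℝ):ℂ)) (by simpa using by linarith) (by simpa using h0)
    rw [this]
    norm_num
  rw [key] at hG
  have hre : Real.Gamma (1-a) * Real.Gamma a = ∫ x in (0:ℝ)..1, x ^ (-a) * (1-x) ^ (a-1) := by
    have := hG
    rw [Complex.Gamma_ofReal, Complex.Gamma_ofReal, ← Complex.ofReal_mul] at this
    exact_mod_cast this
  have : ∫ x in Ioo (0:ℝ) 1, x ^ (-a) * (1-x) ^ (a-1)
      = ∫ x in (0:ℝ)..1, x ^ (-a) * (1-x) ^ (a-1) := by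
    rw [intervalIntegral.integral_of_le (by norm_num), ← integral_Ioc_eq_integral_Ioo]
  rw [this, ← hre, mul_comm, Real.Gamma_mul_Gamma_one_sub]

private lemma cov_aux (b β ξ : ℝ) (hb : 1 < b) (hβ : 0 < β) (hξ : 0 < ξ)
    (hbeta : ∫ x in Ioo (0:ℝ) 1, x ^ (-(1/b)) * (1-x) ^ ((1/b)-1) = π / Real.sin (π * (1/b))) :
    ∫ t in Ioi (0:ℝ), β * t ^ (-b) / (β * t ^ (-b) + ξ)
      = β ^ (1/b) * ξ ^ (-(1/b)) * ((π / b) / Real.sin (π / b)) := by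
  have hb0 : (0:ℝ) < b := by linarith
  set a : ℝ := 1/b with ha_def
  have ha0 : 0 < a := by positivity
  have ha1 : a < 1 := by rw [ha_def, div_lt_one hb0]; exact hb
  have hab : a * b = 1 := by rw [ha_def]; field_simp
  set c : ℝ := (β/ξ) ^ a with hc_def
  have hc : 0 < c := Real.rpow_pos_of_pos (by positivity) a
  set H : ℝ → ℝ := fun t => β * t ^ (-b) / (β * t ^ (-b) + ξ) with hH_def
  set φ : ℝ → ℝ := fun x => c * (x⁻¹ - 1) ^ a with hφ_def
  set φ' : ℝ → ℝ := fun x => c * (a * (x⁻¹ - 1) ^ (a-1) * (-(x^2)⁻¹)) with hφ'_def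
  have hs : ∀ x ∈ Ioo (0:ℝ) 1, 0 < x⁻¹ - 1 := by
    intro x hx
    have : 1 < x⁻¹ := (one_lt_inv₀ hx.1).2 hx.2
    linarith
  have hφpos : ∀ x ∈ Ioo (0:ℝ) 1, 0 < φ x := fun x hx =>
    mul_pos hc (Real.rpow_pos_of_pos (hs x hx) a)
  have hφb : ∀ x ∈ Ioo (0:ℝ) 1, β * (φ x) ^ (-b) = ξ * (x⁻¹ - 1)⁻¹ := by
    intro x hx
    have hsx := hs x hx
    have h1 : (φ x) ^ (-b) = c ^ (-b) * ((x⁻¹-1) ^ a) ^ (-b) :=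
      Real.mul_rpow hc.le (Real.rpow_nonneg hsx.le a)
    have hpow : ∀ y : ℝ, 0 < y → (y ^ a) ^ (-b) = y⁻¹ := by
      intro y hy
      rw [← Real.rpow_mul hy.le, show a * (-b) = -1 by rw [mul_neg, hab], Real.rpow_neg_one]
    have h2 : ((x⁻¹-1) ^ a) ^ (-b) = (x⁻¹-1)⁻¹ := hpow _ hsx
    have h3 : c ^ (-b) = ξ/β := by
      rw [hc_def, hpow _ (by positivity), inv_div]
    rw [h1, h2, h3]
    rw [show β * (ξ/β * (x⁻¹-1)⁻¹) = (β/β) * (ξ * (x⁻¹-1)⁻¹) by ring, div_self hβ.ne', one_mul]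
  have hHφ : ∀ x ∈ Ioo (0:ℝ) 1, H (φ x) = x := by
    intro x hx
    have hsx := hs x hx
    rw [hH_def]
    simp only
    rw [hφb x hx]
    have hx0 : x ≠ 0 := ne_of_gt hx.1
    have hx1 : (1:ℝ) - x ≠ 0 := by have := hx.2; intro h; linarith
    have hsx' : x⁻¹ - 1 = (1-x)/x := by field_simp
    rw [hsx', inv_div]
    field_simp [hξ.ne']
    ring
  have hinj : InjOn φ (Ioo (0:ℝ) 1) := by
    intro x hx y hy hxy
    rw [← hHφ x hx, ← hHφ y hy, hxy]
  have himg : φ '' Ioo (0:ℝ) 1 = Ioi (0:ℝ) := by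
    apply Subset.antisymm
    · rintro _ ⟨x, hx, rfl⟩
      exact hφpos x hx
    · intro y hy
      have hy0 : (0:ℝ) < y := hy
      have hyc : 0 < (y/c) ^ b := Real.rpow_pos_of_pos (by positivity) b
      refine ⟨(1 + (y/c) ^ b)⁻¹, ⟨by positivity, ?_⟩, ?_⟩
      · rw [inv_lt_one_iff₀]; right; linarith
      · rw [hφ_def]
        simp only [inv_inv]
        rw [show 1 + (y/c) ^ b - 1 = (y/c) ^ b by ring,
          ← Real.rpow_mul (by positivity), show b * a = 1 by rw [mul_comm]; exact hab,
          Real.rpow_one]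
        field_simp
  have hderiv : ∀ x ∈ Ioo (0:ℝ) 1, HasDerivWithinAt φ (φ' x) (Ioo (0:ℝ) 1) x := by
    intro x hx
    have hx0 : x ≠ 0 := ne_of_gt hx.1
    have hsx := hs x hx
    have d1 : HasDerivAt (fun y : ℝ => y⁻¹ - 1) (-(x^2)⁻¹) x := by
      simpa using (hasDerivAt_inv hx0).sub_const 1
    have d2 := (d1.rpow_const (p := a) (Or.inl hsx.ne')).const_mul c
    refine HasDerivAt.hasDerivWithinAt ?_
    convert d2 using 1
    show c * (a * (x⁻¹ - 1) ^ (a-1) * -(x^2)⁻¹) = _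
    ring
    rfl
  have key := integral_image_eq_integral_abs_deriv_smul measurableSet_Ioo hderiv hinj H
  rw [himg] at key
  have hcongr : ∫ x in Ioo (0:ℝ) 1, |φ' x| • H (φ x)
      = ∫ x in Ioo (0:ℝ) 1, (c * a) * (x ^ (-a) * (1-x) ^ (a-1)) := by
    apply setIntegral_congr_fun measurableSet_Ioo
    intro x hx
    have hx0 : 0 < x := hx.1
    have hx1 : x < 1 := hx.2
    have hsx := hs x hx
    simp only [smul_eq_mul]
    rw [hHφ x hx]
    have habs : |φ' x| = c * a * (x⁻¹-1) ^ (a-1) * (x^2)⁻¹ := by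
      rw [hφ'_def]
      simp only
      have hp1 : (0:ℝ) < (x⁻¹-1) ^ (a-1) := Real.rpow_pos_of_pos hsx (a-1)
      have h2 : (0:ℝ) < (x^2)⁻¹ := by positivity
      have hpos : 0 < c * a * (x⁻¹-1) ^ (a-1) * (x^2)⁻¹ :=
        mul_pos (mul_pos (mul_pos hc ha0) hp1) h2
      rw [abs_of_nonpos (by nlinarith)]
      ring
    rw [habs]
    have hsplit : (x⁻¹-1) ^ (a-1) = (1-x) ^ (a-1) / x ^ (a-1) := by
      rw [show x⁻¹ - 1 = (1-x)/x by field_simp]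
      exact Real.div_rpow (by linarith) hx0.le _
    rw [hsplit]
    have hxa : x ^ (-a) = x ^ (-1 : ℝ) / x ^ (a-1) := by
      rw [← Real.rpow_sub hx0, show (-1:ℝ) - (a-1) = -a by ring]
    rw [hxa, Real.rpow_neg_one]
    have hxne : x ≠ 0 := ne_of_gt hx0
    have hxapos : (0:ℝ) < x ^ (a-1) := Real.rpow_pos_of_pos hx0 _
    field_simp
  rw [key, hcongr, integral_const_mul, hbeta]
  have hc' : c = β ^ a * ξ ^ (-a) := by
    rw [hc_def, Real.div_rpow hβ.le hξ.le, Real.rpow_neg hξ.le, div_eq_mul_inv]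
  rw [hc', show π * a = π / b by rw [ha_def]; ring]
  rw [ha_def]
  ring

theorem stmt_15 (b α β : ℝ) (hb : 1 < b) (hα : 0 < α) (hβ : 0 < β)
    (lam : ℕ → ℝ)
    (hlam : ∀ k : ℕ, α ≤ ((k + 1 : ℕ) : ℝ) ^ b * lam k ∧ ((k + 1 : ℕ) : ℝ) ^ b * lam k ≤ β)
    (ξ : ℝ) (hξ : 0 < ξ) :
    (∑' k : ℕ, lam k / (lam k + ξ) ^ 2 ≤ (1 / ξ) * ∑' k : ℕ, lam k / (lam k + ξ)) ∧
    (∑' k : ℕ, lam k / (lam k + ξ) ≤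
      ∫ t in Set.Ioi (0 : ℝ), β * t ^ (-b) / (β * t ^ (-b) + ξ)) ∧
    (∫ t in Set.Ioi (0 : ℝ), β * t ^ (-b) / (β * t ^ (-b) + ξ) =
      β ^ (1 / b) * ξ ^ (-(1 / b)) * ((π / b) / Real.sin (π / b))) := by
  have hb0 : (0:ℝ) < b := by linarith
  set H : ℝ → ℝ := fun t => β * t ^ (-b) / (β * t ^ (-b) + ξ) with hH_def
  -- positivity of lam
  have hlampos : ∀ k : ℕ, 0 < lam k := by
    intro k
    have hkpow : (0:ℝ) < ((k + 1 : ℕ) : ℝ) ^ b :=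
      Real.rpow_pos_of_pos (by exact_mod_cast Nat.succ_pos k) b
    have h := lt_of_lt_of_le hα (hlam k).1
    rcases mul_pos_iff.mp h with ⟨_, h2⟩ | ⟨h1, _⟩
    · exact h2
    · linarith
  -- upper bound on lam
  have hlamub : ∀ k : ℕ, lam k ≤ β * ((k + 1 : ℕ) : ℝ) ^ (-b) := by
    intro k
    have hkpos : (0:ℝ) < ((k + 1 : ℕ) : ℝ) := by exact_mod_cast Nat.succ_pos k
    have hkpow : (0:ℝ) < ((k + 1 : ℕ) : ℝ) ^ b := Real.rpow_pos_of_pos hkpos b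
    rw [Real.rpow_neg hkpos.le, mul_comm β, inv_mul_eq_div, le_div_iff₀ hkpow, mul_comm]
    exact (hlam k).2
  -- mono in numerator: u/(u+ξ) ≤ v/(v+ξ)
  have hmono : ∀ u v : ℝ, 0 ≤ u → u ≤ v → u / (u + ξ) ≤ v / (v + ξ) := by
    intro u v hu huv
    rw [div_le_div_iff₀ (by linarith) (by linarith)]
    nlinarith
  -- H t ≤ (β/ξ) * t^(-b) for t with t^(-b) ≥ 0
  have hHub : ∀ t : ℝ, 0 ≤ t → H t ≤ (β/ξ) * t ^ (-b) := by
    intro t ht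
    have hN : 0 ≤ β * t ^ (-b) := mul_nonneg hβ.le (Real.rpow_nonneg ht _)
    have : H t ≤ β * t ^ (-b) / ξ := by
      rw [hH_def]
      exact div_le_div_of_nonneg_left hN hξ (by linarith)
    calc H t ≤ β * t ^ (-b) / ξ := this
      _ = (β/ξ) * t ^ (-b) := by ring
  have hHnonneg : ∀ t : ℝ, 0 ≤ t → 0 ≤ H t := by
    intro t ht
    have hN : 0 ≤ β * t ^ (-b) := mul_nonneg hβ.le (Real.rpow_nonneg ht _)
    exact div_nonneg hN (by linarith)
  -- antitone
  have hanti : ∀ s t : ℝ, 0 < s → s ≤ t → H t ≤ H s := by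
    intro s t hs hst
    have ht : 0 < t := lt_of_lt_of_le hs hst
    have h1 : t ^ (-b) ≤ s ^ (-b) := by
      rw [Real.rpow_neg hs.le, Real.rpow_neg ht.le]
      exact inv_anti₀ (Real.rpow_pos_of_pos hs b)
        (Real.rpow_le_rpow hs.le hst hb0.le)
    have h2 : β * t ^ (-b) ≤ β * s ^ (-b) := by nlinarith
    exact hmono _ _ (mul_nonneg hβ.le (Real.rpow_nonneg ht.le _)) h2
  -- measurability
  have hmeas : Measurable H := by
    rw [hH_def]; fun_prop
  -- integrability on Ioi 0
  have hInt : IntegrableOn H (Ioi (0:ℝ)) := by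
    rw [← Ioc_union_Ioi_eq_Ioi (zero_le_one (α := ℝ))]
    apply IntegrableOn.union
    · apply Measure.integrableOn_of_bounded (M := 1)
      · rw [Real.volume_Ioc]; exact ENNReal.ofReal_ne_top
      · exact hmeas.aestronglyMeasurable
      · refine (ae_restrict_iff' measurableSet_Ioc).2 (ae_of_all _ fun t ht => ?_)
        have ht0 : 0 < t := ht.1
        have hN : 0 ≤ β * t ^ (-b) := mul_nonneg hβ.le (Real.rpow_nonneg ht0.le _)
        rw [Real.norm_eq_abs, abs_of_nonneg (hHnonneg t ht0.le), hH_def]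
        exact div_le_one_of_le₀ (by linarith) (by linarith)
    · apply Integrable.mono' (g := fun t => (β/ξ) * t ^ (-b))
      · exact (integrableOn_Ioi_rpow_of_lt (by linarith) one_pos).const_mul _
      · exact hmeas.aestronglyMeasurable
      · refine (ae_restrict_iff' measurableSet_Ioi).2 (ae_of_all _ fun t ht => ?_)
        have ht0 : (0:ℝ) < t := lt_trans one_pos ht
        rw [Real.norm_eq_abs, abs_of_nonneg (hHnonneg t ht0.le)]
        exact hHub t ht0.le
  -- union decomposition
  have hU : (⋃ k : ℕ, Ioc ((k:ℝ)) ((k:ℝ)+1)) = Ioi (0:ℝ) := by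
    ext x
    simp only [mem_iUnion, mem_Ioc, mem_Ioi]
    constructor
    · rintro ⟨k, hk1, _⟩
      exact lt_of_le_of_lt (by exact_mod_cast Nat.zero_le k) hk1
    · intro hx
      refine ⟨⌈x⌉₊ - 1, ?_, ?_⟩
      · have h1 : (⌈x⌉₊ : ℝ) < x + 1 := Nat.ceil_lt_add_one hx.le
        have h2 : 1 ≤ ⌈x⌉₊ := Nat.one_le_ceil_iff.2 hx
        have : ((⌈x⌉₊ - 1 : ℕ) : ℝ) = (⌈x⌉₊ : ℝ) - 1 := by
          push_cast [h2]; ring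
        rw [this]; linarith
      · have h2 : 1 ≤ ⌈x⌉₊ := Nat.one_le_ceil_iff.2 hx
        have : ((⌈x⌉₊ - 1 : ℕ) : ℝ) = (⌈x⌉₊ : ℝ) - 1 := by
          push_cast [h2]; ring
        rw [this]
        have := Nat.le_ceil x
        linarith
  -- hasSum of the piece integrals
  have hdisj : Pairwise (Function.onFun Disjoint fun k : ℕ => Ioc ((k:ℝ)) ((k:ℝ)+1)) := by
    intro i j hij
    simp only [Function.onFun]
    rw [Set.Ioc_disjoint_Ioc]
    rcases hij.lt_or_gt with h | h
    · have : (i:ℝ) + 1 ≤ (j:ℝ) := by exact_mod_cast h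
      calc min ((i:ℝ)+1) ((j:ℝ)+1) ≤ (i:ℝ)+1 := min_le_left _ _
        _ ≤ (j:ℝ) := this
        _ ≤ max (i:ℝ) (j:ℝ) := le_max_right _ _
    · have : (j:ℝ) + 1 ≤ (i:ℝ) := by exact_mod_cast h
      calc min ((i:ℝ)+1) ((j:ℝ)+1) ≤ (j:ℝ)+1 := min_le_right _ _
        _ ≤ (i:ℝ) := this
        _ ≤ max (i:ℝ) (j:ℝ) := le_max_left _ _
  have hsum : HasSum (fun k : ℕ => ∫ t in Ioc ((k:ℝ)) ((k:ℝ)+1), H t)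
      (∫ t in Ioi (0:ℝ), H t) := by
    have := hasSum_integral_iUnion (μ := volume) (f := H)
      (s := fun k : ℕ => Ioc ((k:ℝ)) ((k:ℝ)+1))
      (fun k => measurableSet_Ioc) hdisj (by rw [hU]; exact hInt)
    rwa [hU] at this
  -- per-term comparison with the integral
  have hterm : ∀ k : ℕ, H ((k:ℝ)+1) ≤ ∫ t in Ioc ((k:ℝ)) ((k:ℝ)+1), H t := by
    intro k
    have hk0 : (0:ℝ) ≤ (k:ℝ) := Nat.cast_nonneg k
    have hsub : Ioc ((k:ℝ)) ((k:ℝ)+1) ⊆ Ioi (0:ℝ) := fun x hx =>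
      lt_of_le_of_lt hk0 hx.1
    have hIntk : IntegrableOn H (Ioc ((k:ℝ)) ((k:ℝ)+1)) := hInt.mono_set hsub
    have hconst : ∫ t in Ioc ((k:ℝ)) ((k:ℝ)+1), H ((k:ℝ)+1) = H ((k:ℝ)+1) := by
      rw [setIntegral_const, Real.volume_real_Ioc_of_le (by linarith), show (k:ℝ)+1-(k:ℝ) = 1 by ring,
        one_smul]
    rw [← hconst]
    apply setIntegral_mono_on (integrableOn_const (by rw [Real.volume_Ioc]; exact ENNReal.ofReal_ne_top)) hIntk measurableSet_Ioc
    intro x hx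
    exact hanti x ((k:ℝ)+1) (lt_of_le_of_lt hk0 hx.1) hx.2
  -- summability chain
  have hDsum : Summable (fun k : ℕ => (β/ξ) * (((k+1:ℕ)):ℝ) ^ (-b)) := by
    apply Summable.mul_left
    have h1 : Summable (fun n : ℕ => (n:ℝ) ^ (-b)) :=
      Real.summable_nat_rpow.2 (by linarith)
    exact (_root_.summable_nat_add_iff 1).2 h1
  have hCk : ∀ k : ℕ, H (((k+1:ℕ)):ℝ) ≤ (β/ξ) * (((k+1:ℕ)):ℝ) ^ (-b) := fun k =>
    hHub _ (by positivity)
  have hCnonneg : ∀ k : ℕ, 0 ≤ H (((k+1:ℕ)):ℝ) := fun k => hHnonneg _ (by positivity)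
  have hCsum : Summable (fun k : ℕ => H (((k+1:ℕ)):ℝ)) :=
    hDsum.of_nonneg_of_le hCnonneg hCk
  have hBle : ∀ k : ℕ, lam k / (lam k + ξ) ≤ H (((k+1:ℕ)):ℝ) := by
    intro k
    have hkpos : (0:ℝ) < (((k+1:ℕ)):ℝ) := by positivity
    have := hmono (lam k) (β * (((k+1:ℕ)):ℝ) ^ (-b)) (hlampos k).le (hlamub k)
    rwa [hH_def]
  have hBnonneg : ∀ k : ℕ, 0 ≤ lam k / (lam k + ξ) := fun k =>
    div_nonneg (hlampos k).le (by linarith [hlampos k])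
  have hBsum : Summable (fun k : ℕ => lam k / (lam k + ξ)) :=
    hCsum.of_nonneg_of_le hBnonneg hBle
  have hAle : ∀ k : ℕ, lam k / (lam k + ξ) ^ 2 ≤ (1/ξ) * (lam k / (lam k + ξ)) := by
    intro k
    have h0 := hlampos k
    have hp : 0 < lam k + ξ := by linarith
    rw [show 1/ξ * (lam k/(lam k+ξ)) = lam k/(ξ*(lam k+ξ)) by rw [div_mul_div_comm, one_mul],
      div_le_div_iff₀ (pow_pos hp 2) (mul_pos hξ hp)]
    nlinarith [mul_pos h0 hp]
  have hAnonneg : ∀ k : ℕ, 0 ≤ lam k / (lam k + ξ) ^ 2 := fun k =>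
    div_nonneg (hlampos k).le (by positivity)
  have hAsum : Summable (fun k : ℕ => lam k / (lam k + ξ) ^ 2) :=
    (hBsum.mul_left (1/ξ)).of_nonneg_of_le hAnonneg hAle
  refine ⟨?_, ?_, ?_⟩
  · calc ∑' k : ℕ, lam k / (lam k + ξ) ^ 2
        ≤ ∑' k : ℕ, (1/ξ) * (lam k / (lam k + ξ)) :=
          Summable.tsum_le_tsum hAle hAsum (hBsum.mul_left _)
      _ = (1/ξ) * ∑' k : ℕ, lam k / (lam k + ξ) := tsum_mul_left
  · have step1 : ∑' k : ℕ, lam k / (lam k + ξ) ≤ ∑' k : ℕ, H (((k+1:ℕ)):ℝ) :=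
      Summable.tsum_le_tsum hBle hBsum hCsum
    have step2 : ∑' k : ℕ, H (((k+1:ℕ)):ℝ)
        ≤ ∑' k : ℕ, ∫ t in Ioc ((k:ℝ)) ((k:ℝ)+1), H t := by
      apply Summable.tsum_le_tsum _ hCsum hsum.summable
      intro k
      have : (((k+1:ℕ)):ℝ) = (k:ℝ) + 1 := by push_cast; ring
      rw [this]
      exact hterm k
    calc ∑' k : ℕ, lam k / (lam k + ξ) ≤ _ := step1
      _ ≤ _ := step2
      _ = ∫ t in Ioi (0:ℝ), H t := hsum.tsum_eq
  · exact cov_aux b β ξ hb hβ hξ (beta_real_aux (1/b) (by positivity)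
      (by rw [div_lt_one hb0]; exact hb))
end

section
/- Let f(m) = m^{-(2+d)} ξ^{-3} + m^{-(1+d)} ξ^{-(2+1/b)} + m^{-d} ξ^{-1} + ξ^{c} + m^{-2} ξ^{-1} + m^{-1} ξ^{-1/b} with b > 1, c ∈ (1,2], d > 0. If d ≤ b(c+1)/(bc+1) and ξ = m^{-d/(c+1)}, then f(m) = O(m^{-dc/(c+1)}) as m → ∞; if d > b(c+1)/(bc+1) and ξ = m^{-b/(bc+1)}, then f(m) = O(m^{-bc/(bc+1)}). -/
open Filter Asymptotics

/-! With `ξ = m ^ (-α)` every term of the bound is a power of `m` with exponent affine in `α`,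
so the bound is `O(m ^ (-r))` as soon as each of the six exponents is at most `-r`. The choice of
`α` balances the bias term `ξ ^ c` against the dominant variance term, `m⁻¹ * ξ ^ (-(1 / b))` when
`d ≤ b(c+1)/(bc+1)` and `m ^ (-d) * ξ⁻¹` otherwise; the other constraints then follow from
`b > 0` and `c ≥ 1`. -/

noncomputable def errorBound (b c d m ξ : ℝ) : ℝ :=
  m ^ (-(2 + d)) * ξ ^ (-(3 : ℝ)) + m ^ (-(1 + d)) * ξ ^ (-(2 + 1 / b))
    + m ^ (-d) * ξ⁻¹ + ξ ^ c + m ^ (-(2 : ℝ)) * ξ⁻¹ + m⁻¹ * ξ ^ (-(1 / b))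

lemma isBigO_rpow_rpow_atTop_of_le {p q : ℝ} (h : p ≤ q) :
    (fun m : ℝ => m ^ p) =O[atTop] fun m => m ^ q := by
  refine IsBigO.of_bound 1 ?_
  filter_upwards [eventually_ge_atTop 1] with m hm
  have hm0 : 0 ≤ m := zero_le_one.trans hm
  rw [one_mul, Real.norm_rpow_of_nonneg hm0, Real.norm_rpow_of_nonneg hm0, Real.norm_of_nonneg hm0]
  exact Real.rpow_le_rpow_of_exponent_le hm h

lemma errorBound_rpow_eventuallyEq (b c d α : ℝ) :
    (fun m => errorBound b c d m (m ^ (-α))) =ᶠ[atTop] fun m =>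
      m ^ (-(2 + d) + 3 * α) + m ^ (-(1 + d) + (2 + 1 / b) * α) + m ^ (-d + α)
        + m ^ (-(c * α)) + m ^ (-2 + α) + m ^ (-1 + α / b) := by
  filter_upwards [eventually_gt_atTop 0] with m hm
  rw [errorBound, ← Real.rpow_neg_one (m ^ (-α)), ← Real.rpow_neg_one m]
  simp only [← Real.rpow_mul hm.le, ← Real.rpow_add hm]
  ring_nf

lemma errorBound_isBigO_rpow {b c d α r : ℝ}
    (h₁ : 3 * α + r ≤ 2 + d) (h₂ : (2 + 1 / b) * α + r ≤ 1 + d) (h₃ : α + r ≤ d)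
    (h₄ : r ≤ c * α) (h₅ : α + r ≤ 2) (h₆ : α / b + r ≤ 1) :
    (fun m => errorBound b c d m (m ^ (-α))) =O[atTop] fun m => m ^ (-r) := by
  have bound {p : ℝ} (h : p ≤ -r) := isBigO_rpow_rpow_atTop_of_le h
  refine IsBigO.congr' ?_ (errorBound_rpow_eventuallyEq b c d α).symm EventuallyEq.rfl
  exact (((((bound (by linarith)).add (bound (by linarith))).add (bound (by linarith))).add
    (bound (by linarith))).add (bound (by linarith))).add (bound (by linarith))

lemma errorBound_isBigO_of_le {b c d : ℝ} (hb : 0 < b) (hc : 1 ≤ c)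
    (hd : d ≤ b * (c + 1) / (b * c + 1)) :
    (fun m => errorBound b c d m (m ^ (-(d / (c + 1))))) =O[atTop]
      fun m => m ^ (-(d * c / (c + 1))) := by
  have hc₁ : 0 < c + 1 := by linarith
  have hbc : 0 < b * c + 1 := by positivity
  rw [le_div_iff₀ hbc] at hd
  -- `h₃`, `h₄` hold with equality and `h₆` is `hd`.
  apply errorBound_isBigO_rpow <;> field_simp <;> nlinarith [mul_le_mul_of_nonneg_left hc hb.le]

lemma errorBound_isBigO_of_gt {b c d : ℝ} (hb : 0 < b) (hc : 1 ≤ c)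
    (hd : b * (c + 1) / (b * c + 1) < d) :
    (fun m => errorBound b c d m (m ^ (-(b / (b * c + 1))))) =O[atTop]
      fun m => m ^ (-(b * c / (b * c + 1))) := by
  have hbc : 0 < b * c + 1 := by positivity
  rw [div_lt_iff₀ hbc] at hd
  -- `h₄`, `h₆` hold with equality and `h₃` is `hd`.
  apply errorBound_isBigO_rpow <;> field_simp <;> nlinarith [mul_le_mul_of_nonneg_left hc hb.le]

theorem stmt_18_general (b c d : ℝ) (hb : 1 < b) (hc1 : 1 < c)
    (f : ℝ → ℝ → ℝ)
    (hf : ∀ m ξ, f m ξ = m ^ (-(2 + d)) * ξ ^ (-(3 : ℝ)) + m ^ (-(1 + d)) * ξ ^ (-(2 + 1 / b))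
      + m ^ (-d) * ξ⁻¹ + ξ ^ c + m ^ (-(2 : ℝ)) * ξ⁻¹ + m⁻¹ * ξ ^ (-(1 / b))) :
    (d ≤ b * (c + 1) / (b * c + 1) →
      (fun m : ℝ => f m (m ^ (-(d / (c + 1))))) =O[atTop]
        fun m : ℝ => m ^ (-(d * c / (c + 1)))) ∧
    (d > b * (c + 1) / (b * c + 1) →
      (fun m : ℝ => f m (m ^ (-(b / (b * c + 1))))) =O[atTop]
        fun m : ℝ => m ^ (-(b * c / (b * c + 1)))) := by
  have hf' : f = errorBound b c d := funext₂ hf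
  subst hf'
  exact ⟨errorBound_isBigO_of_le (by linarith) hc1.le, errorBound_isBigO_of_gt (by linarith) hc1.le⟩

theorem stmt_18 (b c d : ℝ) (hb : 1 < b) (hc1 : 1 < c) (hc2 : c ≤ 2) (hd : 0 < d)
    (f : ℝ → ℝ → ℝ)
    (hf : ∀ m ξ, f m ξ = m ^ (-(2 + d)) * ξ ^ (-(3 : ℝ)) + m ^ (-(1 + d)) * ξ ^ (-(2 + 1 / b))
      + m ^ (-d) * ξ⁻¹ + ξ ^ c + m ^ (-(2 : ℝ)) * ξ⁻¹ + m⁻¹ * ξ ^ (-(1 / b))) :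
    (d ≤ b * (c + 1) / (b * c + 1) →
      (fun m : ℝ => f m (m ^ (-(d / (c + 1))))) =O[atTop]
        fun m : ℝ => m ^ (-(d * c / (c + 1)))) ∧
    (d > b * (c + 1) / (b * c + 1) →
      (fun m : ℝ => f m (m ^ (-(b / (b * c + 1))))) =O[atTop]
        fun m : ℝ => m ^ (-(b * c / (b * c + 1)))) :=
  stmt_18_general b c d hb hc1 f hf
end
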